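/- Let Γ act by isometries on a compact metric space M with warped metrics d_t, and suppose for R > 0 that δ_Γ(R) := min over nontrivial γ with ‖γ‖ ≤ R of min over x ∈ M of d(x, γx) is positive (the action is free with displacement bounds). Fix r > 0 and t > 2r/δ_Γ(2r). Then for any x, y ∈ M with d_t(x, y) < r, there exists a unique γ ∈ Γ with ‖γ‖ ≤ r and d_M(γx, y) < r/t. -/

import Mathlib

/-!
Unwinding the infimum defining `d_t(x, y) < r` gives `γ` with `t·d(x, γy) + ‖γ‖ < r`, and since
the action is isometric `γ⁻¹` is the required jump. Two jumps `γ, η` of length `≤ r` differ by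
`γ⁻¹η` of length `≤ 2r`, which moves `x` by `d(γx, ηx) < 2r/t < δ`; the displacement bound
forces `γ⁻¹η = 1`.
-/

/-- Word norm of `g` with respect to a generating set `S`. -/
noncomputable def wordNorm {G : Type*} [Group G] (S : Set G) (g : G) : ℕ :=
  sInf {n | ∃ l : List G, l.length = n ∧ (∀ x ∈ l, x ∈ S) ∧ l.prod = g}

/-- The warped cone level-set distance
`d_t(x,y) = inf_{γ ∈ Γ} (t · d_M(x, γ·y) + ‖γ‖)`. -/
noncomputable def warpedDist {G M : Type*} [Group G] [MetricSpace M] [MulAction G M]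
    (S : Set G) (t : ℝ) (x y : M) : ℝ :=
  ⨅ γ : G, (t * dist x (γ • y) + (wordNorm S γ : ℝ))

section WordNorm

variable {G : Type*} [Group G] {S : Set G}

lemma wordNorm_le_length (l : List G) (hl : ∀ s ∈ l, s ∈ S) :
    wordNorm S l.prod ≤ l.length :=
  Nat.sInf_le ⟨l, rfl, hl, rfl⟩

variable (hsymm : ∀ g ∈ S, g⁻¹ ∈ S) (hgen : Subgroup.closure S = ⊤)
include hsymm hgen

lemma exists_list_length_eq_wordNorm (g : G) :
    ∃ l : List G, l.length = wordNorm S g ∧ (∀ s ∈ l, s ∈ S) ∧ l.prod = g := by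
  refine Nat.sInf_mem (s := {n | ∃ l : List G, l.length = n ∧ (∀ s ∈ l, s ∈ S) ∧ l.prod = g}) ?_
  have hg : g ∈ (Subgroup.closure S).toSubmonoid := by simp [hgen]
  rw [Subgroup.closure_toSubmonoid] at hg
  obtain ⟨l, hl, rfl⟩ := Submonoid.exists_list_of_mem_closure hg
  refine ⟨l.length, l, rfl, fun s hs => ?_, rfl⟩
  rcases hl s hs with h | h
  · exact h
  · simpa using hsymm _ h

lemma wordNorm_inv_le (g : G) : wordNorm S g⁻¹ ≤ wordNorm S g := by
  obtain ⟨l, hlen, hS, rfl⟩ := exists_list_length_eq_wordNorm hsymm hgen g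
  have hS' : ∀ s ∈ (l.map (·⁻¹)).reverse, s ∈ S := by
    simp only [List.mem_reverse, List.mem_map]
    rintro _ ⟨s, hs, rfl⟩
    exact hsymm s (hS s hs)
  simpa [← List.prod_inv_reverse, hlen] using wordNorm_le_length _ hS'

lemma wordNorm_mul_le (g h : G) : wordNorm S (g * h) ≤ wordNorm S g + wordNorm S h := by
  obtain ⟨l₁, hlen₁, hS₁, rfl⟩ := exists_list_length_eq_wordNorm hsymm hgen g
  obtain ⟨l₂, hlen₂, hS₂, rfl⟩ := exists_list_length_eq_wordNorm hsymm hgen h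
  have hS : ∀ s ∈ l₁ ++ l₂, s ∈ S := fun s hs =>
    (List.mem_append.mp hs).elim (hS₁ s) (hS₂ s)
  simpa [hlen₁, hlen₂] using wordNorm_le_length _ hS

lemma wordNorm_inv_mul_le (g h : G) : wordNorm S (g⁻¹ * h) ≤ wordNorm S g + wordNorm S h :=
  (wordNorm_mul_le hsymm hgen _ _).trans (Nat.add_le_add_right (wordNorm_inv_le hsymm hgen g) _)

end WordNorm

section Action

variable {G M : Type*} [Group G] [MetricSpace M] [MulAction G M] [IsIsometricSMul G M]
  {S : Set G} (hsymm : ∀ g ∈ S, g⁻¹ ∈ S) (hgen : Subgroup.closure S = ⊤)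
include hsymm hgen

lemma exists_wordNorm_le_dist_smul_lt_of_warpedDist_lt {t r : ℝ} (ht : 0 < t) {x y : M}
    (hxy : warpedDist S t x y < r) :
    ∃ γ : G, (wordNorm S γ : ℝ) ≤ r ∧ dist (γ • x) y < r / t := by
  obtain ⟨γ, hγ⟩ := exists_lt_of_ciInf_lt hxy
  have hdist : dist (γ⁻¹ • x) y = dist x (γ • y) := by
    rw [← dist_smul γ, smul_inv_smul]
  refine ⟨γ⁻¹, ?_, ?_⟩
  · have hinv : (wordNorm S γ⁻¹ : ℝ) ≤ wordNorm S γ := by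
      exact_mod_cast wordNorm_inv_le hsymm hgen γ
    have : 0 ≤ t * dist x (γ • y) := by positivity
    linarith
  · rw [hdist, lt_div_iff₀ ht, mul_comm]
    linarith [(wordNorm S γ).cast_nonneg (α := ℝ)]

lemma eq_of_dist_smul_add_dist_smul_lt {R δ : ℝ}
    (hdisp : ∀ γ : G, γ ≠ 1 → (wordNorm S γ : ℝ) ≤ R → ∀ x : M, δ ≤ dist x (γ • x))
    {g h : G} (hgh : (wordNorm S g : ℝ) + wordNorm S h ≤ R) {x y : M}
    (hxy : dist (g • x) y + dist (h • x) y < δ) : g = h := by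
  by_contra hne
  have hnorm : (wordNorm S (g⁻¹ * h) : ℝ) ≤ R :=
    le_trans (by exact_mod_cast wordNorm_inv_mul_le hsymm hgen g h) hgh
  have hmove : dist x ((g⁻¹ * h) • x) = dist (g • x) (h • x) := by
    rw [← dist_smul g, mul_smul, smul_inv_smul]
  have := hdisp _ (mt inv_mul_eq_one.mp hne) hnorm x
  linarith [dist_triangle_right (g • x) (h • x) y]

end Action

theorem unique_orbital_jump_general {G M : Type*} [Group G] [MetricSpace M]
    [MulAction G M]
    (S : Set G) (hsymm : ∀ g ∈ S, g⁻¹ ∈ S)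
    (hgen : Subgroup.closure S = ⊤)
    (hiso : ∀ γ : G, Isometry (fun x : M => γ • x))
    (r t δ : ℝ) (hr : 0 < r) (hδ : 0 < δ)
    (hdisp : ∀ γ : G, γ ≠ 1 → (wordNorm S γ : ℝ) ≤ 2 * r → ∀ x : M, δ ≤ dist x (γ • x))
    (ht : 2 * r / δ < t) :
    ∀ x y : M, warpedDist S t x y < r →
      ∃! γ : G, (wordNorm S γ : ℝ) ≤ r ∧ dist (γ • x) y < r / t := by
  have : IsIsometricSMul G M := ⟨hiso⟩
  have ht₀ : 0 < t := lt_trans (by positivity) ht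
  have hjump : r / t + r / t < δ := by
    rw [← add_div, div_lt_iff₀ ht₀, ← two_mul]
    rwa [div_lt_iff₀ hδ, mul_comm t] at ht
  intro x y hxy
  obtain ⟨γ, hγ, hγx⟩ := exists_wordNorm_le_dist_smul_lt_of_warpedDist_lt hsymm hgen ht₀ hxy
  refine ⟨γ, ⟨hγ, hγx⟩, fun η ⟨hη, hηx⟩ => ?_⟩
  exact eq_of_dist_smul_add_dist_smul_lt hsymm hgen hdisp (by linarith) (x := x) (y := y)
    (by linarith)

/-- Let `Γ` act isometrically on a compact metric space `M` with warped metrics `d_t`,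
and suppose `δ = δ_Γ(2r) > 0` is a lower displacement bound: every nontrivial `γ` of
word length at most `2r` displaces every point by at least `δ`.  Fix `r > 0` and
`t > 2r/δ`.  Then for any `x, y ∈ M` with `d_t(x, y) < r` there is a unique `γ ∈ Γ`
with `‖γ‖ ≤ r` and `d_M(γx, y) < r/t`. -/
theorem unique_orbital_jump {G M : Type*} [Group G] [MetricSpace M] [CompactSpace M]
    [MulAction G M]
    (S : Set G) (hSfin : S.Finite) (hsymm : ∀ g ∈ S, g⁻¹ ∈ S)
    (hgen : Subgroup.closure S = ⊤)
    (hiso : ∀ γ : G, Isometry (fun x : M => γ • x))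
    (r t δ : ℝ) (hr : 0 < r) (hδ : 0 < δ)
    (hdisp : ∀ γ : G, γ ≠ 1 → (wordNorm S γ : ℝ) ≤ 2 * r → ∀ x : M, δ ≤ dist x (γ • x))
    (ht : 2 * r / δ < t) :
    ∀ x y : M, warpedDist S t x y < r →
      ∃! γ : G, (wordNorm S γ : ℝ) ≤ r ∧ dist (γ • x) y < r / t :=
  unique_orbital_jump_general S hsymm hgen hiso r t δ hr hδ hdisp ht
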